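/- arXiv:1906.06484 — 2 statements merged into one kernel-verified Lean document; each statement's English description precedes it below -/
import Mathlib

section
/- (Strong consistency of the plug-in joint entropy estimator) E(p̂_{(X,Y)}^{(n)}) = -Σ_{i,j} p̂_{Z,δ_i^j}^{(n)} log p̂_{Z,δ_i^j}^{(n)} converges almost surely to E(p_{(X,Y)}) = -Σ_{i,j} p_{Z,δ_i^j} log p_{Z,δ_i^j} as n → ∞, with limsup_n |E(p̂^{(n)}) - E(p)|/a_{Z,n} ≤ Σ_k |1 + log p_{Z,k}| almost surely. -/
open MeasureTheory ProbabilityTheory Filter Real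

/-!
By the strong law of large numbers every empirical frequency `p̂ₖ` converges almost surely
to `pₖ`, and the plug-in entropy `∑ₖ negMulLog p̂ₖ` is a continuous function of the
frequencies. For the rate, `negMulLog` is differentiable at `pₖ > 0` with derivative
`-(1 + log pₖ)`, so once `p̂` is close to `p` each term moves by at most
`(|1 + log pₖ| + ε) |p̂ₖ - pₖ|`; summing over `k` and dividing by `supₖ |p̂ₖ - pₖ|` gives
the limsup bound (the quotient is `0 / 0 = 0` when `p̂ = p`).
-/

open Finset in
theorem neg_sum_mul_log_eq_sum_negMulLog {ι : Type*} (s : Finset ι) (q : ι → ℝ) :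
    -∑ i ∈ s, q i * log (q i) = ∑ i ∈ s, negMulLog (q i) := by
  simp only [negMulLog, neg_mul, sum_neg_distrib]

theorem HasDerivAt.eventually_abs_sub_le {f : ℝ → ℝ} {f' x ε : ℝ} (hf : HasDerivAt f f' x)
    (hε : 0 < ε) : ∀ᶠ y in nhds x, |f y - f x| ≤ (|f'| + ε) * |y - x| := by
  filter_upwards [hf.isLittleO.def hε] with y hy
  simp only [Real.norm_eq_abs, smul_eq_mul] at hy
  calc |f y - f x|
      = |(f y - f x - (y - x) * f') + (y - x) * f'| := by ring_nf
    _ ≤ |f y - f x - (y - x) * f'| + |(y - x) * f'| := abs_add_le _ _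
    _ ≤ ε * |y - x| + |y - x| * |f'| := by rw [abs_mul]; gcongr
    _ = (|f'| + ε) * |y - x| := by ring

theorem limsup_abs_sum_sub_div_iSup_le {α ι : Type*} [Fintype ι] {l : Filter α} [l.NeBot]
    {f : ι → ℝ → ℝ} {f' x : ι → ℝ} (hf : ∀ i, HasDerivAt (f i) (f' i) (x i))
    {y : α → ι → ℝ} (hy : ∀ i, Tendsto (fun a => y a i) l (nhds (x i))) :
    limsup (fun a => |∑ i, f i (y a i) - ∑ i, f i (x i)| / ⨆ i, |y a i - x i|) l
      ≤ ∑ i, |f' i| := by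
  refine le_of_forall_pos_le_add fun ε hε => ?_
  set δ := ε / (Fintype.card ι + 1)
  have hδ : 0 < δ := by positivity
  have hlocal : ∀ᶠ a in l, ∀ i, |f i (y a i) - f i (x i)| ≤ (|f' i| + δ) * |y a i - x i| :=
    eventually_all.2 fun i => hy i ((hf i).eventually_abs_sub_le hδ)
  have hnonneg : ∀ a, 0 ≤ |∑ i, f i (y a i) - ∑ i, f i (x i)| / ⨆ i, |y a i - x i| :=
    fun a => div_nonneg (abs_nonneg _) (Real.iSup_nonneg fun i => abs_nonneg _)
  refine limsup_le_of_le (isCoboundedUnder_le_of_le l hnonneg) ?_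
  filter_upwards [hlocal] with a ha
  have hsup : ∀ i, |y a i - x i| ≤ ⨆ j, |y a j - x j| :=
    le_ciSup (Set.finite_range _).bddAbove
  refine div_le_of_le_mul₀ (Real.iSup_nonneg fun i => abs_nonneg _) (by positivity) ?_
  calc |∑ i, f i (y a i) - ∑ i, f i (x i)|
      ≤ ∑ i, |f i (y a i) - f i (x i)| := by
        rw [← Finset.sum_sub_distrib]; exact Finset.abs_sum_le_sum_abs _ _
    _ ≤ ∑ i, (|f' i| + δ) * ⨆ j, |y a j - x j| := by
        gcongr with i; exact (ha i).trans (by gcongr; exact hsup i)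
    _ = (∑ i, |f' i| + Fintype.card ι * δ) * ⨆ j, |y a j - x j| := by
        rw [← Finset.sum_mul, Finset.sum_add_distrib, Finset.sum_const, Finset.card_univ,
          nsmul_eq_mul]
    _ ≤ (∑ i, |f' i| + ε) * ⨆ j, |y a j - x j| := by
        gcongr
        · exact Real.iSup_nonneg fun i => abs_nonneg _
        · rw [mul_div_assoc', div_le_iff₀ (by positivity)]
          nlinarith

theorem identDistrib_of_measure_preimage_singleton_eq {Ω Ω' K : Type*} [MeasurableSpace Ω]
    [MeasurableSpace Ω'] [MeasurableSpace K] [Countable K] [MeasurableSingletonClass K]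
    {μ : Measure Ω} {ν : Measure Ω'} {X : Ω → K} {Y : Ω' → K} (hX : Measurable X)
    (hY : Measurable Y) (h : ∀ k, μ (X ⁻¹' {k}) = ν (Y ⁻¹' {k})) : IdentDistrib X Y μ ν where
  aemeasurable_fst := hX.aemeasurable
  aemeasurable_snd := hY.aemeasurable
  map_eq := Measure.ext_of_singleton fun k => by
    rw [Measure.map_apply hX (measurableSet_singleton k),
      Measure.map_apply hY (measurableSet_singleton k), h]

theorem ae_tendsto_empirical_frequency {Ω K : Type*} [MeasurableSpace Ω] {μ : Measure Ω}
    [IsFiniteMeasure μ] [MeasurableSpace K] [MeasurableSingletonClass K] [DecidableEq K]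
    {Z : ℕ → Ω → K} (hmeas : ∀ n, Measurable (Z n))
    (hindep : Pairwise fun i j => IndepFun (Z i) (Z j) μ)
    (hident : ∀ n, IdentDistrib (Z n) (Z 0) μ μ) (k : K) :
    ∀ᵐ ω ∂μ, Tendsto (fun n : ℕ => (n : ℝ)⁻¹ * ∑ ℓ ∈ Finset.range n,
      if Z ℓ ω = k then (1 : ℝ) else 0) atTop (nhds (μ.real (Z 0 ⁻¹' {k}))) := by
  set g : K → ℝ := ({k} : Set K).indicator 1
  have hg : Measurable g := measurable_const.indicator (measurableSet_singleton k)
  have hmean : μ[g ∘ Z 0] = μ.real (Z 0 ⁻¹' {k}) := by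
    rw [← integral_indicator_one ((hmeas 0) (measurableSet_singleton k))]
    rfl
  have hint : Integrable (g ∘ Z 0) μ :=
    (integrable_const (1 : ℝ)).indicator ((hmeas 0) (measurableSet_singleton k))
  have hslln := strong_law_ae_real (fun n => g ∘ Z n) hint
    (fun i j hij => (hindep hij).comp hg hg) (fun n => (hident n).comp hg)
  rw [hmean] at hslln
  filter_upwards [hslln] with ω hω
  convert hω using 2 with n
  simp only [g, Function.comp_apply, Set.indicator_apply, Set.mem_singleton_iff, Pi.one_apply,
    div_eq_inv_mul]

theorem plugin_entropy_consistency_general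
    {Ω : Type*} [MeasurableSpace Ω] (μ : Measure Ω) [IsProbabilityMeasure μ]
    {K : Type*} [Fintype K] [DecidableEq K] [MeasurableSpace K] [MeasurableSingletonClass K]
    (Z : ℕ → Ω → K) (p : K → ℝ) (hp : ∀ k, 0 < p k)
    (hmeas : ∀ n, Measurable (Z n))
    (hindep : iIndepFun Z μ)
    (hdist : ∀ n k, (μ {ω | Z n ω = k}).toReal = p k)
    (phat : ℕ → Ω → K → ℝ)
    (hphat : ∀ n ω k, phat n ω k
        = (n : ℝ)⁻¹ * ∑ ℓ ∈ Finset.range n, if Z ℓ ω = k then (1 : ℝ) else 0) :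
    (∀ᵐ ω ∂μ, Tendsto
        (fun n : ℕ => -∑ k, phat n ω k * log (phat n ω k))
        atTop (nhds (-∑ k, p k * log (p k)))) ∧
    (∀ᵐ ω ∂μ, limsup (fun n : ℕ =>
        |(-∑ k, phat n ω k * log (phat n ω k)) - (-∑ k, p k * log (p k))| /
          (⨆ k : K, |phat n ω k - p k|)) atTop ≤ ∑ k, |1 + log (p k)|) := by
  have hident : ∀ n, IdentDistrib (Z n) (Z 0) μ μ := fun n =>
    identDistrib_of_measure_preimage_singleton_eq (hmeas n) (hmeas 0) fun k =>
      (ENNReal.toReal_eq_toReal_iff' (measure_ne_top μ _) (measure_ne_top μ _)).1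
        ((hdist n k).trans (hdist 0 k).symm)
  have hfreq : ∀ᵐ ω ∂μ, ∀ k, Tendsto (fun n => phat n ω k) atTop (nhds (p k)) := by
    refine ae_all_iff.2 fun k => ?_
    have := ae_tendsto_empirical_frequency hmeas (fun i j hij => hindep.indepFun hij) hident k
    have hlaw : μ.real (Z 0 ⁻¹' {k}) = p k := hdist 0 k
    simpa only [← hphat, hlaw] using this
  simp only [neg_sum_mul_log_eq_sum_negMulLog]
  refine ⟨?_, ?_⟩
  · filter_upwards [hfreq] with ω hω
    exact tendsto_finsetSum _ fun k _ => (continuous_negMulLog.tendsto _).comp (hω k)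
  · filter_upwards [hfreq] with ω hω
    convert limsup_abs_sum_sub_div_iSup_le (fun k => hasDerivAt_negMulLog (hp k).ne') hω
      using 2 with k
    rw [← abs_neg]
    ring_nf

/-- Strong consistency of the plug-in joint entropy estimator: it converges
almost surely to the true joint entropy, with the almost sure limsup bound
`limsup |E(p̂^{(n)}) - E(p)| / a_{Z,n} ≤ Σ_k |1 + log p_{Z,k}|`. -/
theorem plugin_entropy_consistency
    {Ω : Type*} [MeasurableSpace Ω] (μ : Measure Ω) [IsProbabilityMeasure μ]
    {K : Type*} [Fintype K] [DecidableEq K] [Nonempty K] [MeasurableSpace K] [MeasurableSingletonClass K]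
    (Z : ℕ → Ω → K) (p : K → ℝ) (hp : ∀ k, 0 < p k)
    (hmeas : ∀ n, Measurable (Z n))
    (hindep : iIndepFun Z μ)
    (hdist : ∀ n k, (μ {ω | Z n ω = k}).toReal = p k)
    (phat : ℕ → Ω → K → ℝ)
    (hphat : ∀ n ω k, phat n ω k
        = (n : ℝ)⁻¹ * ∑ ℓ ∈ Finset.range n, if Z ℓ ω = k then (1 : ℝ) else 0) :
    (∀ᵐ ω ∂μ, Tendsto
        (fun n : ℕ => -∑ k, phat n ω k * log (phat n ω k))
        atTop (nhds (-∑ k, p k * log (p k)))) ∧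
    (∀ᵐ ω ∂μ, limsup (fun n : ℕ =>
        |(-∑ k, phat n ω k * log (phat n ω k)) - (-∑ k, p k * log (p k))| /
          (⨆ k : K, |phat n ω k - p k|)) atTop ≤ ∑ k, |1 + log (p k)|) :=
  plugin_entropy_consistency_general μ Z p hp hmeas hindep hdist phat hphat
end

section
/- (Strong consistency of the plug-in mutual information estimator) E_{S.m.i.}(p̂_{(X,Y)}^{(n)}) = Σ_{i,j} p̂_{Z,δ_i^j}^{(n)} log(p̂_{Z,δ_i^j}^{(n)}/(p̂_{X,i}^{(n)} p̂_{Y,j}^{(n)})) converges almost surely to E_{S.m.i.}(p_{(X,Y)}) = Σ_{i,j} p_{i,j} log(p_{i,j}/(p_{X,i} p_{Y,j})) as n → ∞. -/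
/-!
By the strong law of large numbers, applied to the indicators of the events `Z ℓ = k`, the
empirical p.m.f. converges almost surely, pointwise and hence in the product topology, to `p`.
The plug-in mutual information is a continuous function of the p.m.f. at every `p` with positive
entries, since there all the quotients and logarithms involved have nonzero arguments.
-/

open MeasureTheory ProbabilityTheory Filter Real Topology

namespace ProbabilityTheory

variable {Ω α : Type*} [MeasurableSpace Ω] [MeasurableSpace α] [MeasurableSingletonClass α]

theorem identDistrib_of_measureReal_preimage_singleton [Countable α] {μ ν : Measure Ω}
    [IsFiniteMeasure μ] [IsFiniteMeasure ν] {X Y : Ω → α} (hX : Measurable X) (hY : Measurable Y)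
    (h : ∀ a, μ.real (X ⁻¹' {a}) = ν.real (Y ⁻¹' {a})) : IdentDistrib X Y μ ν where
  aemeasurable_fst := hX.aemeasurable
  aemeasurable_snd := hY.aemeasurable
  map_eq := Measure.ext_of_singleton fun a => by
    rw [Measure.map_apply hX (.singleton a), Measure.map_apply hY (.singleton a),
      ← ENNReal.toReal_eq_toReal_iff' (measure_ne_top _ _) (measure_ne_top _ _)]
    exact h a

theorem ae_tendsto_empiricalFrequency [DecidableEq α] {μ : Measure Ω} [IsFiniteMeasure μ]
    {Z : ℕ → Ω → α} (hZ₀ : Measurable (Z 0)) (hindep : Pairwise fun i j => IndepFun (Z i) (Z j) μ)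
    (hident : ∀ n, IdentDistrib (Z n) (Z 0) μ μ) (a : α) :
    ∀ᵐ ω ∂μ, Tendsto
      (fun n : ℕ => (n : ℝ)⁻¹ * ∑ ℓ ∈ Finset.range n, if Z ℓ ω = a then (1 : ℝ) else 0)
      atTop (𝓝 (μ.real (Z 0 ⁻¹' {a}))) := by
  let g : α → ℝ := fun b => if b = a then 1 else 0
  have hg : Measurable g := measurable_const.ite (.singleton a) measurable_const
  have hg_comp : g ∘ Z 0 = (Z 0 ⁻¹' {a}).indicator 1 := by
    ext ω
    simp only [Function.comp_apply, Set.indicator, Set.mem_preimage, Set.mem_singleton_iff, g,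
      Pi.one_apply]
  have hmeasurableSet : MeasurableSet (Z 0 ⁻¹' {a}) := hZ₀ (.singleton a)
  have hint : Integrable (g ∘ Z 0) μ := by
    rw [hg_comp]
    exact (integrable_const 1).indicator hmeasurableSet
  have hmean : μ[g ∘ Z 0] = μ.real (Z 0 ⁻¹' {a}) := by
    rw [hg_comp, integral_indicator_one hmeasurableSet]
  rw [← hmean]
  simpa only [smul_eq_mul, Function.comp_apply, g] using strong_law_ae (fun ℓ => g ∘ Z ℓ) hint
    (fun i j hij => (hindep hij).comp hg hg) fun n => (hident n).comp hg

end ProbabilityTheory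

noncomputable def mutualInformation {α β : Type*} [Fintype α] [Fintype β] (q : α × β → ℝ) : ℝ :=
  ∑ ij : α × β, q ij * log (q ij / ((∑ j, q (ij.1, j)) * (∑ i, q (i, ij.2))))

theorem continuousAt_mutualInformation {α β : Type*} [Fintype α] [Fintype β] {q : α × β → ℝ}
    (hq : ∀ k, 0 < q k) : ContinuousAt mutualInformation q := by
  refine tendsto_finsetSum _ fun ij _ => ?_
  have hmarginal_pos : 0 < (∑ j, q (ij.1, j)) * ∑ i, q (i, ij.2) :=
    mul_pos (Finset.sum_pos (fun _ _ => hq _) ⟨ij.2, Finset.mem_univ _⟩)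
      (Finset.sum_pos (fun _ _ => hq _) ⟨ij.1, Finset.mem_univ _⟩)
  have hcoord : ∀ k, ContinuousAt (fun q : α × β → ℝ => q k) q := fun k =>
    (continuous_apply k).continuousAt
  have hmarginal : ContinuousAt
      (fun q : α × β → ℝ => (∑ j, q (ij.1, j)) * ∑ i, q (i, ij.2)) q :=
    (tendsto_finsetSum _ fun j _ => hcoord _).mul
      (tendsto_finsetSum _ fun i _ => hcoord _)
  exact (hcoord ij).mul (((hcoord ij).div hmarginal hmarginal_pos.ne').log
    (div_pos (hq ij) hmarginal_pos).ne')

theorem plugin_mutualInformation_consistency_general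
    {Ω : Type*} [MeasurableSpace Ω] (μ : Measure Ω) [IsProbabilityMeasure μ]
    (r s : ℕ)
    (Z : ℕ → Ω → Fin r × Fin s) (p : Fin r × Fin s → ℝ) (hp : ∀ k, 0 < p k)
    (hmeas : ∀ n, Measurable (Z n))
    (hindep : iIndepFun Z μ)
    (hdist : ∀ n k, (μ {ω | Z n ω = k}).toReal = p k)
    (phat : ℕ → Ω → Fin r × Fin s → ℝ)
    (hphat : ∀ n ω k, phat n ω k
        = (n : ℝ)⁻¹ * ∑ ℓ ∈ Finset.range n, if Z ℓ ω = k then (1 : ℝ) else 0) :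
    ∀ᵐ ω ∂μ, Tendsto
      (fun n : ℕ => ∑ ij : Fin r × Fin s, phat n ω ij *
        log (phat n ω ij / ((∑ j, phat n ω (ij.1, j)) * (∑ i, phat n ω (i, ij.2)))))
      atTop
      (nhds (∑ ij : Fin r × Fin s, p ij *
        log (p ij / ((∑ j, p (ij.1, j)) * (∑ i, p (i, ij.2)))))) := by
  have hident : ∀ n, IdentDistrib (Z n) (Z 0) μ μ := fun n =>
    identDistrib_of_measureReal_preimage_singleton (hmeas n) (hmeas 0) fun k =>
      (hdist n k).trans (hdist 0 k).symm
  have hfreq : ∀ᵐ ω ∂μ, ∀ k, Tendsto (fun n => phat n ω k) atTop (𝓝 (p k)) := by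
    refine ae_all_iff.2 fun k => ?_
    simpa only [hphat, show μ.real (Z 0 ⁻¹' {k}) = p k from hdist 0 k] using
      ae_tendsto_empiricalFrequency (hmeas 0) (fun i j hij => hindep.indepFun hij) hident k
  filter_upwards [hfreq] with ω hω
  exact (continuousAt_mutualInformation hp).tendsto.comp (tendsto_pi_nhds.2 hω)

/-- Strong consistency of the plug-in Shannon mutual information estimator:
it converges almost surely to the true mutual information
(terms with vanishing empirical frequency are `0` since `Real.log 0 = 0`
and `0 * log 0 = 0`). -/
theorem plugin_mutualInformation_consistency
    {Ω : Type*} [MeasurableSpace Ω] (μ : Measure Ω) [IsProbabilityMeasure μ]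
    (r s : ℕ) (hr : 0 < r) (hs : 0 < s)
    (Z : ℕ → Ω → Fin r × Fin s) (p : Fin r × Fin s → ℝ) (hp : ∀ k, 0 < p k)
    (hmeas : ∀ n, Measurable (Z n))
    (hindep : iIndepFun Z μ)
    (hdist : ∀ n k, (μ {ω | Z n ω = k}).toReal = p k)
    (phat : ℕ → Ω → Fin r × Fin s → ℝ)
    (hphat : ∀ n ω k, phat n ω k
        = (n : ℝ)⁻¹ * ∑ ℓ ∈ Finset.range n, if Z ℓ ω = k then (1 : ℝ) else 0) :
    ∀ᵐ ω ∂μ, Tendsto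
      (fun n : ℕ => ∑ ij : Fin r × Fin s, phat n ω ij *
        log (phat n ω ij / ((∑ j, phat n ω (ij.1, j)) * (∑ i, phat n ω (i, ij.2)))))
      atTop
      (nhds (∑ ij : Fin r × Fin s, p ij *
        log (p ij / ((∑ j, p (ij.1, j)) * (∑ i, p (i, ij.2)))))) :=
  plugin_mutualInformation_consistency_general μ r s Z p hp hmeas hindep hdist phat hphat
end
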